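/- arXiv:1211.2607 — 4 statements merged into one kernel-verified Lean document; each statement's English description precedes it below -/
import Mathlib

section
/- Let H be a Hilbert space with inner product <.,.>_R, let C be a bounded self-adjoint nonnegative operator on H, and let (omega_k) be a sequence in H with <C omega_j, omega_k>_{L2} = delta_{jk} (orthonormality with respect to the C-form) and <omega_j, omega_k>_R = delta_{jk}/nu_k. If f = sum_k f_k omega_k with f_k = nu_k <f, omega_k>_R and the series converges absolutely, then <Cf, f>_{L2} = sum_k f_k^2 and ||f||_R^2 - <Cf,f>_{L2} = sum_k gamma_k^{-1} f_k^2 where gamma_k = (nu_k^{-1} - 1)^{-1}. -/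
open scoped InnerProductSpace

/-
Expanding f = ∑ f_k ω_k and pairing with a fixed vector reduces every quantity to a series in the
coefficients. The C-orthonormality of (ω_k) and the symmetry of C give ⟪C f, ω_k⟫ = f_k, hence
⟪C f, f⟫ = ∑ f_k². Pairing f with itself gives ‖f‖² = ∑ f_k ⟪f, ω_k⟫ = ∑ ν_k⁻¹ f_k², because
f_k = ν_k ⟪f, ω_k⟫; subtracting the two series gives the second identity.
-/

section

variable {ι H : Type*} [NormedAddCommGroup H] [InnerProductSpace ℝ H]

theorem HasSum.mul_inner_right {c : ι → ℝ} {v : ι → H} {f : H}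
    (hf : HasSum (fun k => c k • v k) f) (x : H) :
    HasSum (fun k => c k * ⟪x, v k⟫_ℝ) ⟪x, f⟫_ℝ := by
  simpa only [innerSL_apply_apply, inner_smul_right] using hf.mapL (innerSL ℝ x)

variable [CompleteSpace H] [DecidableEq ι] {C : H →L[ℝ] H} {ω : ι → H} {c : ι → ℝ} {f : H}

theorem inner_apply_eq_coeff_of_hasSum_smul (hC : IsSelfAdjoint C)
    (hCorth : ∀ j k, ⟪C (ω j), ω k⟫_ℝ = if j = k then 1 else 0)
    (hf : HasSum (fun k => c k • ω k) f) (k : ι) :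
    ⟪C f, ω k⟫_ℝ = c k := by
  have hsingle : HasSum (fun j => c j * ⟪C (ω k), ω j⟫_ℝ) (c k * ⟪C (ω k), ω k⟫_ℝ) :=
    hasSum_single k fun j hj => by simp [hCorth, Ne.symm hj]
  calc ⟪C f, ω k⟫_ℝ = ⟪C (ω k), f⟫_ℝ := by
        rw [real_inner_comm]; exact (hC.isSymmetric (ω k) f).symm
    _ = c k * ⟪C (ω k), ω k⟫_ℝ := (hf.mul_inner_right (C (ω k))).unique hsingle
    _ = c k := by simp [hCorth]

theorem hasSum_sq_inner_apply_self_of_hasSum_smul (hC : IsSelfAdjoint C)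
    (hCorth : ∀ j k, ⟪C (ω j), ω k⟫_ℝ = if j = k then 1 else 0)
    (hf : HasSum (fun k => c k • ω k) f) :
    HasSum (fun k => c k ^ 2) ⟪C f, f⟫_ℝ := by
  have hsum := hf.mul_inner_right (C f)
  simp only [inner_apply_eq_coeff_of_hasSum_smul hC hCorth hf] at hsum
  simpa only [sq] using hsum

end

theorem stmt_5_general {H : Type*} [NormedAddCommGroup H] [InnerProductSpace ℝ H] [CompleteSpace H]
    (C : H →L[ℝ] H) (hC : IsSelfAdjoint C)
    (ν : ℕ → ℝ) (hν : ∀ k, 0 < ν k) (ω : ℕ → H)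
    (hCorth : ∀ j k, ⟪C (ω j), ω k⟫_ℝ = if j = k then 1 else 0)
    (f : H)
    (hexp : HasSum (fun k => (ν k * ⟪f, ω k⟫_ℝ) • ω k) f) :
    HasSum (fun k => (ν k * ⟪f, ω k⟫_ℝ) ^ 2) ⟪C f, f⟫_ℝ ∧
    HasSum (fun k => ((ν k)⁻¹ - 1) * (ν k * ⟪f, ω k⟫_ℝ) ^ 2) (‖f‖^2 - ⟪C f, f⟫_ℝ) := by
  have hCf := hasSum_sq_inner_apply_self_of_hasSum_smul hC hCorth hexp
  have hnorm : HasSum (fun k => (ν k)⁻¹ * (ν k * ⟪f, ω k⟫_ℝ) ^ 2) (‖f‖ ^ 2) := by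
    rw [← real_inner_self_eq_norm_sq]
    convert hexp.mul_inner_right f using 2 with k
    field_simp [(hν k).ne']
  exact ⟨hCf, by simpa only [sub_mul, one_mul] using hnorm.sub hCf⟩

theorem stmt_5 {H : Type*} [NormedAddCommGroup H] [InnerProductSpace ℝ H] [CompleteSpace H]
    (C : H →L[ℝ] H) (hC : IsSelfAdjoint C) (hCnn : ∀ f : H, 0 ≤ ⟪C f, f⟫_ℝ)
    (ν : ℕ → ℝ) (hν : ∀ k, 0 < ν k) (ω : ℕ → H)
    (hCorth : ∀ j k, ⟪C (ω j), ω k⟫_ℝ = if j = k then 1 else 0)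
    (hRorth : ∀ j k, ⟪ω j, ω k⟫_ℝ = if j = k then (ν k)⁻¹ else 0)
    (f : H)
    (habs : Summable fun k => ‖(ν k * ⟪f, ω k⟫_ℝ) • ω k‖)
    (hexp : HasSum (fun k => (ν k * ⟪f, ω k⟫_ℝ) • ω k) f) :
    HasSum (fun k => (ν k * ⟪f, ω k⟫_ℝ) ^ 2) ⟪C f, f⟫_ℝ ∧
    HasSum (fun k => ((ν k)⁻¹ - 1) * (ν k * ⟪f, ω k⟫_ℝ) ^ 2) (‖f‖^2 - ⟪C f, f⟫_ℝ) :=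
  stmt_5_general C hC ν hν ω hCorth f hexp
end

section
/- Let gamma_k = c * k^{-2p} for constants c > 0 and p > 1/2, and let 0 <= a <= 1. Then for lambda > 0 small, sum_{k=1}^infinity (1 + gamma_k^{-a}) / (1 + lambda gamma_k^{-1})^2 is bounded above and below by constant multiples of lambda^{-(a + 1/(2p))}. -/
/-!
Put `x = μ^(-1/q)`, so that `μ xᑫ = 1`, and `N = ⌊x⌋`. For `n ≤ N` the denominator
`(1 + μ nᑫ)²` lies in `[1, 4]`: the first `N` terms are at most `xᵇ` each, and the `≥ x/4`
terms with `N/2 < n ≤ N` are at least `(x/4)ᵇ/4` each. For `n > N` the term is at most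
`μ⁻² n^(b-2q)`, and comparing with `∫ t^(b-2q) dt` over `[N, ∞)`, where `N ≥ x/2`, the tail is
`O(μ⁻² x^(b+1-2q)) = O(x^(b+1))` as long as `b + 1 < 2q`. Hence the series is
`≍ x^(b+1) = μ^(-(b+1)/q)`. The theorem is the case `q = 2p`, `b = 2pa`, `μ = λ/c`: its terms are
`(1 + μ nᑫ)⁻² + c^(-a) nᵇ / (1 + μ nᑫ)²`, and `(1 + μ nᑫ)⁻² ≤ nᵇ / (1 + μ nᑫ)²`.
-/

open Real Finset

theorem sum_range_rpow_neg_le {s x : ℝ} (hs : 1 < s) (hx : 0 < x) (n : ℕ) :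
    ∑ i ∈ range n, (x + ↑(i + 1)) ^ (-s) ≤ x ^ (1 - s) / (s - 1) := by
  have hanti : AntitoneOn (fun t : ℝ => t ^ (-s)) (Set.Icc x (x + n)) := fun t ht t' _ htt' =>
    rpow_le_rpow_of_nonpos (hx.trans_le ht.1) htt' (by linarith)
  have hzero : (0 : ℝ) ∉ Set.uIcc x (x + n) := by
    rw [Set.uIcc_of_le (le_add_of_nonneg_right n.cast_nonneg)]
    exact fun h => hx.not_ge h.1
  calc ∑ i ∈ range n, (x + ↑(i + 1)) ^ (-s) ≤ ∫ t in x..x + n, t ^ (-s) := hanti.sum_le_integral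
    _ = (x ^ (1 - s) - (x + n) ^ (1 - s)) / (s - 1) := by
        rw [integral_rpow (Or.inr ⟨by linarith, hzero⟩), neg_add_eq_sub, ← neg_sub s 1,
          div_neg, ← neg_div, neg_sub]
    _ ≤ x ^ (1 - s) / (s - 1) := by
        gcongr
        exact sub_le_self _ (rpow_nonneg (by positivity) _)

/-- The `k`-th term, `n = k + 1`, of the series `∑ₙ nᵇ / (1 + μ nᑫ)²`. -/
noncomputable def resolventTerm (b q μ : ℝ) (k : ℕ) : ℝ :=
  ((k : ℝ) + 1) ^ b / (1 + μ * ((k : ℝ) + 1) ^ q) ^ 2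

namespace resolventTerm

variable {b q μ : ℝ}

theorem nonneg (hμ : 0 ≤ μ) (k : ℕ) : 0 ≤ resolventTerm b q μ k := by
  unfold resolventTerm; positivity

theorem le_rpow (hμ : 0 ≤ μ) (k : ℕ) : resolventTerm b q μ k ≤ ((k : ℝ) + 1) ^ b :=
  div_le_self (by positivity) (one_le_pow₀ (le_add_of_nonneg_right (by positivity)))

theorem le_inv_sq_mul_rpow_neg (hμ : 0 < μ) (k : ℕ) :
    resolventTerm b q μ k ≤ (μ ^ 2)⁻¹ * ((k : ℝ) + 1) ^ (-(2 * q - b)) := by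
  have hn : (0 : ℝ) < (k : ℝ) + 1 := by positivity
  calc resolventTerm b q μ k ≤ ((k : ℝ) + 1) ^ b / (μ * ((k : ℝ) + 1) ^ q) ^ 2 := by
        unfold resolventTerm; gcongr; linarith
    _ = (μ ^ 2)⁻¹ * ((k : ℝ) + 1) ^ (-(2 * q - b)) := by
        rw [neg_sub, rpow_sub hn, mul_pow, ← rpow_mul_natCast hn.le, Nat.cast_ofNat, mul_comm q,
          div_mul_eq_div_div, div_eq_inv_mul _ (μ ^ 2), mul_div_assoc]

theorem rpow_div_four_le (hμ : 0 ≤ μ) {k : ℕ} (hk : μ * ((k : ℝ) + 1) ^ q ≤ 1) :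
    ((k : ℝ) + 1) ^ b / 4 ≤ resolventTerm b q μ k := by
  unfold resolventTerm
  gcongr
  nlinarith [show 0 ≤ μ * ((k : ℝ) + 1) ^ q by positivity]

theorem inv_sq_le (hb : 0 ≤ b) (hμ : 0 ≤ μ) (k : ℕ) :
    ((1 + μ * ((k : ℝ) + 1) ^ q) ^ 2)⁻¹ ≤ resolventTerm b q μ k := by
  rw [resolventTerm, div_eq_mul_inv]
  exact le_mul_of_one_le_left (by positivity) (one_le_rpow (by linarith) hb)

theorem summable (hμ : 0 < μ) (hbq : b + 1 < 2 * q) : Summable (resolventTerm b q μ) := by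
  have hs : Summable fun k : ℕ => ((k + 1 : ℕ) : ℝ) ^ (-(2 * q - b)) :=
    (summable_nat_add_iff 1).2 (Real.summable_nat_rpow.2 (by linarith))
  refine .of_nonneg_of_le (nonneg hμ.le) (le_inv_sq_mul_rpow_neg hμ)
    ((hs.mul_left (μ ^ 2)⁻¹).congr fun k => ?_)
  push_cast; rfl

variable {x : ℝ}

theorem sum_range_floor_le (hb : 0 ≤ b) (hμ : 0 ≤ μ) (hx : 0 ≤ x) :
    ∑ k ∈ range ⌊x⌋₊, resolventTerm b q μ k ≤ x ^ (b + 1) :=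
  calc ∑ k ∈ range ⌊x⌋₊, resolventTerm b q μ k ≤ ∑ _k ∈ range ⌊x⌋₊, x ^ b := by
        refine sum_le_sum fun k hk => (le_rpow hμ k).trans (rpow_le_rpow (by positivity) ?_ hb)
        exact_mod_cast (Nat.le_floor_iff hx).1 (mem_range.1 hk)
    _ = ⌊x⌋₊ * x ^ b := by rw [sum_const, card_range, nsmul_eq_mul]
    _ ≤ x * x ^ b := by gcongr; exact Nat.floor_le hx
    _ = x ^ (b + 1) := by rw [rpow_add_one' hx (by linarith), mul_comm]

theorem le_sum_range_floor (hb : 0 ≤ b) (hq : 0 ≤ q) (hμ : 0 ≤ μ) (hx : 1 ≤ x)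
    (hμx : μ * x ^ q = 1) :
    (x / 4) ^ (b + 1) / 4 ≤ ∑ k ∈ range ⌊x⌋₊, resolventTerm b q μ k := by
  set N := ⌊x⌋₊
  have hxN : x < N + 1 := Nat.lt_floor_add_one x
  have hN : 1 ≤ N := Nat.one_le_floor_iff x |>.2 hx
  have hterm : ∀ k ∈ Ico (N / 2) N, (x / 4) ^ b / 4 ≤ resolventTerm b q μ k := by
    intro k hk
    rw [mem_Ico] at hk
    have hkx : (k : ℝ) + 1 ≤ x := by exact_mod_cast (Nat.le_floor_iff (by linarith)).1 hk.2
    have hk4 : x / 4 ≤ (k : ℝ) + 1 := by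
      have : (N : ℝ) ≤ 2 * k + 1 := by exact_mod_cast (by omega : N ≤ 2 * k + 1)
      linarith
    calc (x / 4) ^ b / 4 ≤ ((k : ℝ) + 1) ^ b / 4 := by gcongr
      _ ≤ resolventTerm b q μ k := rpow_div_four_le hμ <|
          calc μ * ((k : ℝ) + 1) ^ q ≤ μ * x ^ q := by gcongr
            _ = 1 := hμx
  have hcard : x / 4 ≤ (#(Ico (N / 2) N) : ℝ) := by
    have : (N : ℝ) ≤ 2 * (N - N / 2 : ℕ) := by exact_mod_cast (by omega : N ≤ 2 * (N - N / 2))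
    have : (1 : ℝ) ≤ N := by exact_mod_cast hN
    rw [Nat.card_Ico]
    linarith
  calc (x / 4) ^ (b + 1) / 4 = x / 4 * ((x / 4) ^ b / 4) := by
        rw [rpow_add_one' (by positivity) (by linarith)]; ring
    _ ≤ #(Ico (N / 2) N) * ((x / 4) ^ b / 4) := by gcongr
    _ ≤ ∑ k ∈ Ico (N / 2) N, resolventTerm b q μ k := by
        simpa only [nsmul_eq_mul] using card_nsmul_le_sum _ _ _ hterm
    _ ≤ ∑ k ∈ range N, resolventTerm b q μ k :=
        sum_le_sum_of_subset_of_nonneg (fun k hk => mem_range.2 (mem_Ico.1 hk).2)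
          fun k _ _ => nonneg hμ k

theorem tsum_nat_add_floor_le (hbq : b + 1 < 2 * q) (hμ : 0 < μ) (hx : 1 ≤ x)
    (hμx : μ * x ^ q = 1) :
    ∑' k, resolventTerm b q μ (k + ⌊x⌋₊) ≤
      2 ^ (2 * q - b - 1) / (2 * q - b - 1) * x ^ (b + 1) := by
  set N := ⌊x⌋₊
  have hs : 1 < 2 * q - b := by linarith
  have hN : x / 2 ≤ N := by
    have : x < N + 1 := Nat.lt_floor_add_one x
    have : (1 : ℝ) ≤ N := by exact_mod_cast Nat.one_le_floor_iff x |>.2 hx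
    linarith
  have hμ2 : (μ ^ 2)⁻¹ = x ^ (2 * q) := by
    rw [eq_inv_of_mul_eq_one_left hμx, inv_pow, inv_inv, ← rpow_mul_natCast (by linarith),
      mul_comm, Nat.cast_ofNat]
  refine Real.tsum_le_of_sum_range_le (fun k => nonneg hμ.le _) fun n => ?_
  calc ∑ k ∈ range n, resolventTerm b q μ (k + N)
      ≤ ∑ k ∈ range n, (μ ^ 2)⁻¹ * ((N : ℝ) + ↑(k + 1)) ^ (-(2 * q - b)) := by
        gcongr with k
        refine (le_inv_sq_mul_rpow_neg hμ (k + N)).trans_eq ?_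
        push_cast
        ring_nf
    _ ≤ (μ ^ 2)⁻¹ * ((N : ℝ) ^ (1 - (2 * q - b)) / (2 * q - b - 1)) := by
        rw [← mul_sum]
        gcongr
        exact sum_range_rpow_neg_le hs (by linarith) n
    _ ≤ x ^ (2 * q) * ((x / 2) ^ (1 - (2 * q - b)) / (2 * q - b - 1)) := by
        rw [hμ2]
        have := rpow_le_rpow_of_nonpos (by linarith) hN (by linarith : 1 - (2 * q - b) ≤ 0)
        gcongr
    _ = 2 ^ (2 * q - b - 1) / (2 * q - b - 1) * x ^ (b + 1) := by
        have hx0 : 0 < x := by linarith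
        rw [div_rpow hx0.le zero_le_two, div_eq_mul_inv _ ((2 : ℝ) ^ _), ← rpow_neg zero_le_two,
          neg_sub, mul_div_assoc', ← mul_assoc, ← rpow_add hx0, mul_comm _ ((2 : ℝ) ^ _),
          mul_div_right_comm]
        ring_nf

theorem exists_bounds_tsum (hb : 0 ≤ b) (hbq : b + 1 < 2 * q) :
    ∃ A B : ℝ, 0 < A ∧ 0 < B ∧ ∀ μ : ℝ, 0 < μ → μ ≤ 1 →
      A * μ ^ (-((b + 1) / q)) ≤ ∑' k, resolventTerm b q μ k ∧
      ∑' k, resolventTerm b q μ k ≤ B * μ ^ (-((b + 1) / q)) := by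
  have hq : 0 < q := by linarith
  have hs : 0 < 2 * q - b - 1 := by linarith
  refine ⟨(1 / 4) ^ (b + 1) / 4, 1 + 2 ^ (2 * q - b - 1) / (2 * q - b - 1), by positivity,
    by positivity, fun μ hμ hμ1 => ?_⟩
  set x := μ ^ (-q⁻¹)
  have hx : 1 ≤ x := one_le_rpow_of_pos_of_le_one_of_nonpos hμ hμ1 (by simp [hq.le])
  have hμx : μ * x ^ q = 1 := by
    rw [← rpow_mul hμ.le, neg_mul, inv_mul_cancel₀ hq.ne', rpow_neg_one, mul_inv_cancel₀ hμ.ne']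
  have hxb : x ^ (b + 1) = μ ^ (-((b + 1) / q)) := by
    rw [← rpow_mul hμ.le]; ring_nf
  have hsum := summable hμ hbq
  rw [← hxb]
  constructor
  · calc (1 / 4) ^ (b + 1) / 4 * x ^ (b + 1) = (x / 4) ^ (b + 1) / 4 := by
          rw [div_eq_mul_one_div x, mul_rpow (by linarith) (by norm_num)]; ring
      _ ≤ ∑ k ∈ range ⌊x⌋₊, resolventTerm b q μ k := le_sum_range_floor hb hq.le hμ.le hx hμx
      _ ≤ ∑' k, resolventTerm b q μ k := hsum.sum_le_tsum _ fun k _ => nonneg hμ.le k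
  · rw [← hsum.sum_add_tsum_nat_add ⌊x⌋₊, add_mul, one_mul]
    exact add_le_add (sum_range_floor_le hb hμ.le (by linarith))
      (tsum_nat_add_floor_le hbq hμ hx hμx)

end resolventTerm

theorem tsum_add_mul_bounds_of_le {u w : ℕ → ℝ} {C : ℝ} (hu : Summable u)
    (hw : ∀ k, 0 ≤ w k) (hwu : ∀ k, w k ≤ u k) :
    C * ∑' k, u k ≤ ∑' k, (w k + C * u k) ∧ ∑' k, (w k + C * u k) ≤ (1 + C) * ∑' k, u k := by
  have hw' : Summable w := .of_nonneg_of_le hw hwu hu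
  rw [hw'.tsum_add (hu.mul_left C), tsum_mul_left, add_mul, one_mul]
  exact ⟨le_add_of_nonneg_left (tsum_nonneg hw), add_le_add_left (hw'.tsum_le_tsum hwu hu) _⟩

theorem div_sq_eq_inv_sq_add_mul_resolventTerm {c a q l : ℝ} (hc : 0 < c) (k : ℕ) :
    (1 + (c * ((k : ℝ) + 1) ^ (-q)) ^ (-a)) / (1 + l * (c * ((k : ℝ) + 1) ^ (-q))⁻¹) ^ 2 =
      ((1 + l / c * ((k : ℝ) + 1) ^ q) ^ 2)⁻¹ + c ^ (-a) * resolventTerm (q * a) q (l / c) k := by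
  have hn : (0 : ℝ) < (k : ℝ) + 1 := by positivity
  rw [mul_rpow hc.le (by positivity), ← rpow_mul hn.le, neg_mul_neg, mul_inv, rpow_neg hn.le,
    inv_inv, resolventTerm, div_eq_mul_inv l c]
  ring

theorem stmt_9 (c p : ℝ) (hc : 0 < c) (hp : 1/2 < p)
    (a : ℝ) (ha0 : 0 ≤ a) (ha1 : a ≤ 1) :
    ∃ C1 C2 l0 : ℝ, 0 < C1 ∧ 0 < C2 ∧ 0 < l0 ∧
      ∀ l : ℝ, 0 < l → l < l0 →
        C1 * l ^ (-(a + 1 / (2 * p))) ≤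
          (∑' k : ℕ, (1 + (c * ((k : ℝ) + 1) ^ (-(2 * p))) ^ (-a)) /
            (1 + l * (c * ((k : ℝ) + 1) ^ (-(2 * p)))⁻¹) ^ 2) ∧
        (∑' k : ℕ, (1 + (c * ((k : ℝ) + 1) ^ (-(2 * p))) ^ (-a)) /
            (1 + l * (c * ((k : ℝ) + 1) ^ (-(2 * p)))⁻¹) ^ 2) ≤
          C2 * l ^ (-(a + 1 / (2 * p))) := by
  have hb : 0 ≤ 2 * p * a := by positivity
  have hbq : 2 * p * a + 1 < 2 * (2 * p) := by nlinarith
  obtain ⟨A, B, hA, hB, hbounds⟩ := resolventTerm.exists_bounds_tsum hb hbq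
  have hexp : (2 * p * a + 1) / (2 * p) = a + 1 / (2 * p) := by field_simp
  set e := a + 1 / (2 * p)
  refine ⟨c ^ (-a) * A * c ^ e, (1 + c ^ (-a)) * B * c ^ e, c, by positivity, by positivity, hc,
    fun l hl hlc => ?_⟩
  have hμ : 0 < l / c := div_pos hl hc
  obtain ⟨hlow, hup⟩ := hbounds (l / c) hμ ((div_le_one hc).2 hlc.le)
  have hpow : (l / c) ^ (-e) = l ^ (-e) * c ^ e := by
    rw [div_rpow hl.le hc.le, rpow_neg hc.le, div_inv_eq_mul]
  rw [hexp, hpow] at hlow hup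
  simp_rw [div_sq_eq_inv_sq_add_mul_resolventTerm hc]
  obtain ⟨hvlow, hvup⟩ :=
    tsum_add_mul_bounds_of_le (resolventTerm.summable hμ hbq) (C := c ^ (-a))
      (fun k => by positivity) (resolventTerm.inv_sq_le hb hμ.le)
  constructor
  · calc c ^ (-a) * A * c ^ e * l ^ (-e) = c ^ (-a) * (A * (l ^ (-e) * c ^ e)) := by ring
      _ ≤ _ := by gcongr
      _ ≤ _ := hvlow
  · calc _ ≤ _ := hvup
      _ ≤ (1 + c ^ (-a)) * (B * (l ^ (-e) * c ^ e)) := by gcongr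
      _ = (1 + c ^ (-a)) * B * c ^ e * l ^ (-e) := by ring
end

section
/- Let (a_k)_{k>=1} be square-summable reals with sum_k gamma_k^{-1} a_k^2 = J < infinity, where gamma_k > 0. For lambda > 0 define b_k = a_k / (1 + lambda gamma_k^{-1}). Then for any 0 <= a < 1, sum_k (1 + gamma_k^{-a})(b_k - a_k)^2 <= lambda^2 * J * sup_{x>0} (1 + x^{-a}) x^{-1} / (1 + lambda x^{-1})^2, and this supremum is at most 1/(4 lambda) + C0 lambda^{-(a+1)} for some constant C0 > 0 depending only on a; hence the left-hand side is O(lambda^{1-a} J) as lambda -> 0. -/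
/-! The coefficients of the bias are `b_k - a_k = -a_k t_k / (1 + t_k)` with `t_k = λ / γ_k`, so
each term of the weighted series equals `γ_k⁻¹ a_k² · λ² w(γ_k)` for the filter weight
`w(x) = (1 + x^{-α}) x⁻¹ / (1 + λ x⁻¹)²`; summing against `∑ γ_k⁻¹ a_k² = J` bounds the series
by `λ² J sup w`. The two parts of `w` are bounded separately: `x⁻¹ / (1 + λ/x)² ≤ 1/(4λ)` by AM-GM,
and `x^{-(α+1)} / (1 + λ/x)² = λ^{-(α+1)} t^{α+1} / (1 + t)² ≤ λ^{-(α+1)}` as `0 ≤ α + 1 ≤ 2`.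
Multiplying by `λ²` gives `λ/4 + λ^{1-α} ≤ (5/4) λ^{1-α}` for `λ ≤ 1`. -/

open Real

noncomputable def biasWeight (α l x : ℝ) : ℝ := (1 + x ^ (-α)) * x⁻¹ / (1 + l * x⁻¹) ^ 2

noncomputable def biasWeightSup (α l : ℝ) : ℝ := sSup {y | ∃ x, 0 < x ∧ y = biasWeight α l x}

lemma rpow_le_one_add_sq {t β : ℝ} (ht : 0 ≤ t) (hβ0 : 0 ≤ β) (hβ2 : β ≤ 2) :
    t ^ β ≤ (1 + t) ^ 2 :=
  calc t ^ β ≤ (1 + t) ^ β := rpow_le_rpow ht (by linarith) hβ0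
    _ ≤ (1 + t) ^ (2 : ℝ) := rpow_le_rpow_of_exponent_le (by linarith) hβ2
    _ = (1 + t) ^ 2 := rpow_two _

lemma inv_div_one_add_mul_inv_sq_le {l x : ℝ} (hl : 0 < l) (hx : 0 < x) :
    x⁻¹ / (1 + l * x⁻¹) ^ 2 ≤ 1 / (4 * l) := by
  rw [div_le_div_iff₀ (by positivity) (by positivity), one_mul, ← mul_assoc]
  exact four_mul_le_sq_add 1 (l * x⁻¹) |>.trans_eq' (by ring)

lemma rpow_neg_mul_inv_div_one_add_mul_inv_sq_le {α l x : ℝ} (hl : 0 < l) (hx : 0 < x)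
    (hα0 : -1 ≤ α) (hα1 : α ≤ 1) :
    x ^ (-α) * x⁻¹ / (1 + l * x⁻¹) ^ 2 ≤ l ^ (-(α + 1)) := by
  have ht : 0 < l * x⁻¹ := by positivity
  have hscale : x ^ (-α) * x⁻¹ = l ^ (-(α + 1)) * (l * x⁻¹) ^ (α + 1) := by
    rw [mul_rpow hl.le (inv_nonneg.2 hx.le), ← mul_assoc, ← rpow_add hl, inv_rpow hx.le,
      ← rpow_neg hx.le, ← rpow_neg_one x, ← rpow_add hx, neg_add_cancel, rpow_zero, one_mul, neg_add]
  rw [hscale, mul_div_assoc]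
  refine mul_le_of_le_one_right (by positivity) ((div_le_one (by positivity)).2 ?_)
  exact rpow_le_one_add_sq ht.le (by linarith) (by linarith)

lemma biasWeight_le {α l x : ℝ} (hl : 0 < l) (hx : 0 < x) (hα0 : -1 ≤ α) (hα1 : α ≤ 1) :
    biasWeight α l x ≤ 1 / (4 * l) + l ^ (-(α + 1)) := by
  rw [biasWeight, add_mul, add_div, one_mul]
  exact add_le_add (inv_div_one_add_mul_inv_sq_le hl hx)
    (rpow_neg_mul_inv_div_one_add_mul_inv_sq_le hl hx hα0 hα1)

lemma bddAbove_biasWeight {α l : ℝ} (hl : 0 < l) (hα0 : -1 ≤ α) (hα1 : α ≤ 1) :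
    BddAbove {y | ∃ x, 0 < x ∧ y = biasWeight α l x} := by
  refine ⟨1 / (4 * l) + l ^ (-(α + 1)), ?_⟩
  rintro y ⟨x, hx, rfl⟩
  exact biasWeight_le hl hx hα0 hα1

lemma biasWeightSup_le {α l : ℝ} (hl : 0 < l) (hα0 : -1 ≤ α) (hα1 : α ≤ 1) :
    biasWeightSup α l ≤ 1 / (4 * l) + l ^ (-(α + 1)) := by
  refine csSup_le ⟨_, 1, one_pos, rfl⟩ ?_
  rintro y ⟨x, hx, rfl⟩
  exact biasWeight_le hl hx hα0 hα1

lemma biasWeight_le_biasWeightSup {α l x : ℝ} (hl : 0 < l) (hx : 0 < x)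
    (hα0 : -1 ≤ α) (hα1 : α ≤ 1) : biasWeight α l x ≤ biasWeightSup α l :=
  le_csSup (bddAbove_biasWeight hl hα0 hα1) ⟨x, hx, rfl⟩

lemma shrinkage_bias_sq_eq (α l γ a : ℝ) (h : 1 + l * γ⁻¹ ≠ 0) :
    (1 + γ ^ (-α)) * (a / (1 + l * γ⁻¹) - a) ^ 2 = γ⁻¹ * a ^ 2 * (l ^ 2 * biasWeight α l γ) := by
  rw [biasWeight, div_sub' h, div_pow]
  ring

lemma tsum_mul_le_of_hasSum {ι : Type*} {w g : ι → ℝ} {J M : ℝ} (hw : ∀ k, 0 ≤ w k)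
    (hJ : HasSum w J) (hg0 : ∀ k, 0 ≤ g k) (hgM : ∀ k, g k ≤ M) :
    ∑' k, w k * g k ≤ J * M := by
  have hwg : Summable fun k => w k * g k :=
    (hJ.summable.mul_right M).of_nonneg_of_le (fun k => mul_nonneg (hw k) (hg0 k))
      fun k => mul_le_mul_of_nonneg_left (hgM k) (hw k)
  exact hasSum_le (fun k => mul_le_mul_of_nonneg_left (hgM k) (hw k)) hwg.hasSum (hJ.mul_right M)

theorem tsum_shrinkage_bias_le {ι : Type*} (a γ : ι → ℝ) (hγ : ∀ k, 0 < γ k) {J : ℝ}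
    (hJ : HasSum (fun k => (γ k)⁻¹ * a k ^ 2) J) {α l : ℝ} (hl : 0 < l)
    (hα0 : -1 ≤ α) (hα1 : α ≤ 1) :
    ∑' k, (1 + γ k ^ (-α)) * (a k / (1 + l * (γ k)⁻¹) - a k) ^ 2 ≤
      l ^ 2 * J * biasWeightSup α l := by
  have hden k : 1 + l * (γ k)⁻¹ ≠ 0 := by have := hγ k; positivity
  simp_rw [shrinkage_bias_sq_eq α l _ _ (hden _)]
  refine (tsum_mul_le_of_hasSum (M := l ^ 2 * biasWeightSup α l) (fun k => ?_) hJ (fun k => ?_)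
    fun k => ?_).trans_eq (by ring)
  · have := hγ k; positivity
  · have := hγ k; rw [biasWeight]; positivity
  · exact mul_le_mul_of_nonneg_left
      (biasWeight_le_biasWeightSup hl (hγ k) hα0 hα1) (sq_nonneg l)

lemma sq_mul_biasBound_le {α l : ℝ} (hα0 : 0 ≤ α) (hl : 0 < l) (hl1 : l ≤ 1) :
    l ^ 2 * (1 / (4 * l) + l ^ (-(α + 1))) ≤ 5 / 4 * l ^ (1 - α) := by
  have hlin : l ^ 2 * (1 / (4 * l)) = l / 4 := by field_simp
  have hpow : l ^ 2 * l ^ (-(α + 1)) = l ^ (1 - α) := by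
    rw [← rpow_natCast, ← rpow_add hl]
    congr 1
    push_cast
    ring
  have hl_le : l ≤ l ^ (1 - α) := by
    simpa using rpow_le_rpow_of_exponent_ge hl hl1 (by linarith : 1 - α ≤ 1)
  rw [mul_add, hlin, hpow]
  linarith

theorem stmt_11_general (a γ : ℕ → ℝ) (hγ : ∀ k, 0 < γ k)
    (J : ℝ) (hJ : HasSum (fun k => (γ k)⁻¹ * (a k) ^ 2) J)
    (α : ℝ) (hα0 : 0 ≤ α) (hα1 : α < 1) :
    (∀ l : ℝ, 0 < l →
      (∑' k, (1 + (γ k) ^ (-α)) * (a k / (1 + l * (γ k)⁻¹) - a k) ^ 2) ≤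
        l ^ 2 * J * sSup {y : ℝ | ∃ x : ℝ, 0 < x ∧
          y = (1 + x ^ (-α)) * x⁻¹ / (1 + l * x⁻¹) ^ 2}) ∧
    (∃ C0 : ℝ, 0 < C0 ∧ ∀ l : ℝ, 0 < l →
      sSup {y : ℝ | ∃ x : ℝ, 0 < x ∧ y = (1 + x ^ (-α)) * x⁻¹ / (1 + l * x⁻¹) ^ 2} ≤
        1 / (4 * l) + C0 * l ^ (-(α + 1))) ∧
    (∃ D l0 : ℝ, 0 < D ∧ 0 < l0 ∧ ∀ l : ℝ, 0 < l → l < l0 →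
      (∑' k, (1 + (γ k) ^ (-α)) * (a k / (1 + l * (γ k)⁻¹) - a k) ^ 2) ≤
        D * l ^ (1 - α) * J) := by
  have hα0' : -1 ≤ α := by linarith
  have hJ0 : 0 ≤ J := hJ.nonneg fun k => by have := hγ k; positivity
  have hbias l (hl : 0 < l) := tsum_shrinkage_bias_le a γ hγ hJ hl hα0' hα1.le
  have hsup l (hl : 0 < l) := biasWeightSup_le (α := α) hl hα0' hα1.le
  refine ⟨hbias, ⟨1, one_pos, fun l hl => (one_mul (l ^ (-(α + 1)))).symm ▸ hsup l hl⟩,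
    ⟨5 / 4, 1, by norm_num, one_pos, fun l hl hl1 => ?_⟩⟩
  calc _ ≤ l ^ 2 * J * biasWeightSup α l := hbias l hl
    _ ≤ J * (l ^ 2 * (1 / (4 * l) + l ^ (-(α + 1)))) := by
      rw [mul_comm (l ^ 2) J, mul_assoc]; gcongr; exact hsup l hl
    _ ≤ J * (5 / 4 * l ^ (1 - α)) :=
      mul_le_mul_of_nonneg_left (sq_mul_biasBound_le hα0 hl hl1.le) hJ0
    _ = 5 / 4 * l ^ (1 - α) * J := by ring

theorem stmt_11 (a γ : ℕ → ℝ) (hγ : ∀ k, 0 < γ k)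
    (hsq : Summable fun k => (a k) ^ 2)
    (J : ℝ) (hJ : HasSum (fun k => (γ k)⁻¹ * (a k) ^ 2) J)
    (α : ℝ) (hα0 : 0 ≤ α) (hα1 : α < 1) :
    (∀ l : ℝ, 0 < l →
      (∑' k, (1 + (γ k) ^ (-α)) * (a k / (1 + l * (γ k)⁻¹) - a k) ^ 2) ≤
        l ^ 2 * J * sSup {y : ℝ | ∃ x : ℝ, 0 < x ∧
          y = (1 + x ^ (-α)) * x⁻¹ / (1 + l * x⁻¹) ^ 2}) ∧
    (∃ C0 : ℝ, 0 < C0 ∧ ∀ l : ℝ, 0 < l →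
      sSup {y : ℝ | ∃ x : ℝ, 0 < x ∧ y = (1 + x ^ (-α)) * x⁻¹ / (1 + l * x⁻¹) ^ 2} ≤
        1 / (4 * l) + C0 * l ^ (-(α + 1))) ∧
    (∃ D l0 : ℝ, 0 < D ∧ 0 < l0 ∧ ∀ l : ℝ, 0 < l → l < l0 →
      (∑' k, (1 + (γ k) ^ (-α)) * (a k / (1 + l * (γ k)⁻¹) - a k) ^ 2) ≤
        D * l ^ (1 - α) * J) :=
  stmt_11_general a γ hγ J hJ α hα0 hα1
end

section
/- Let W = Sigma + n*lambda*I where Sigma is a symmetric positive semidefinite n x n real matrix, lambda > 0, and T is an n x 2 real matrix of full column rank. Then the quadratic function F(c,d) = (1/n)||y - (T d + Sigma c)||^2 + lambda c' Sigma c over c in R^n, d in R^2 is minimized at d = (T' W^{-1} T)^{-1} T' W^{-1} y and c = W^{-1} [I - T (T' W^{-1} T)^{-1} T' W^{-1}] y. -/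
/-!
Fix `d` and put `r = y - T d`. With `μ = nλ` and `c₀ = W⁻¹ r`, i.e. `(Σ + μ) c₀ = r`, completing
the square gives
`‖r - Σ c‖² + μ c'Σc = ‖Σ(c - c₀)‖² + μ (c - c₀)'Σ(c - c₀) + μ r'W⁻¹r`,
so `n F(c, d) ≥ μ r'W⁻¹r` with equality at `c = W⁻¹ r`. It remains to minimise the weighted
least squares criterion `(y - T d)'W⁻¹(y - T d)`: the cross term vanishes at any solution of the
normal equations `T'W⁻¹T d = T'W⁻¹y`, and `T'W⁻¹T` is positive definite (hence invertible) because
`W` is positive definite and `T` is injective. The closed forms are exactly the solution `d*` of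
the normal equations and `c* = W⁻¹(y - T d*)`.
-/

open Matrix

namespace Matrix

theorem mulVec_injective_of_rank_eq_card {K m n : Type*} [Field K] [Fintype m] [Fintype n]
    {T : Matrix m n K} (hT : T.rank = Fintype.card n) : Function.Injective T.mulVec := by
  rw [mulVec_injective_iff, linearIndependent_iff_card_eq_finrank_span, Set.finrank,
    ← rank_eq_finrank_span_cols, hT]

variable {ι κ : Type*} [Fintype ι] [Fintype κ]

theorem IsHermitian.dotProduct_mulVec_comm {A : Matrix ι ι ℝ} (hA : A.IsHermitian)
    (u v : ι → ℝ) : u ⬝ᵥ A *ᵥ v = v ⬝ᵥ A *ᵥ u := by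
  rw [dotProduct_mulVec, ← mulVec_transpose, ← conjTranspose_eq_transpose_of_trivial, hA,
    dotProduct_comm]

theorem IsHermitian.dotProduct_mulVec_add {A : Matrix ι ι ℝ} (hA : A.IsHermitian)
    (u v : ι → ℝ) :
    (u + v) ⬝ᵥ A *ᵥ (u + v) = u ⬝ᵥ A *ᵥ u + 2 * (v ⬝ᵥ A *ᵥ u) + v ⬝ᵥ A *ᵥ v := by
  rw [mulVec_add, add_dotProduct, dotProduct_add, dotProduct_add, hA.dotProduct_mulVec_comm u v]
  ring

theorem PosSemidef.dotProduct_mulVec_nonneg' {A : Matrix ι ι ℝ} (hA : A.PosSemidef)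
    (u : ι → ℝ) : 0 ≤ u ⬝ᵥ A *ᵥ u := by
  simpa using hA.dotProduct_mulVec_nonneg u

theorem PosSemidef.weightedLeastSquares_le {P : Matrix ι ι ℝ} (hP : P.PosSemidef)
    (T : Matrix ι κ ℝ) (y : ι → ℝ) {d₀ : κ → ℝ} (hd₀ : (Tᵀ * P * T) *ᵥ d₀ = (Tᵀ * P) *ᵥ y)
    (d : κ → ℝ) :
    (y - T *ᵥ d₀) ⬝ᵥ P *ᵥ (y - T *ᵥ d₀) ≤ (y - T *ᵥ d) ⬝ᵥ P *ᵥ (y - T *ᵥ d) := by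
  have hnormal : Tᵀ *ᵥ (P *ᵥ (y - T *ᵥ d₀)) = 0 := by
    rw [mulVec_mulVec, mulVec_sub, mulVec_mulVec, hd₀, sub_self]
  have hcross : T *ᵥ (d₀ - d) ⬝ᵥ P *ᵥ (y - T *ᵥ d₀) = 0 := by
    rw [dotProduct_comm, dotProduct_mulVec, ← mulVec_transpose, hnormal, zero_dotProduct]
  have hsplit : y - T *ᵥ d = (y - T *ᵥ d₀) + T *ᵥ (d₀ - d) := by
    rw [mulVec_sub]; abel
  rw [hsplit, hP.isHermitian.dotProduct_mulVec_add, hcross]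
  linarith [hP.dotProduct_mulVec_nonneg' (T *ᵥ (d₀ - d))]

theorem IsHermitian.ridgeObjective_eq [DecidableEq ι] {S : Matrix ι ι ℝ} (hS : S.IsHermitian)
    {μ : ℝ} {c₀ r : ι → ℝ} (hr : (S + μ • 1) *ᵥ c₀ = r) (c : ι → ℝ) :
    (r - S *ᵥ c) ⬝ᵥ (r - S *ᵥ c) + μ * (c ⬝ᵥ S *ᵥ c) =
      S *ᵥ (c - c₀) ⬝ᵥ S *ᵥ (c - c₀) + μ * ((c - c₀) ⬝ᵥ S *ᵥ (c - c₀)) + μ * (c₀ ⬝ᵥ r) := by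
  obtain ⟨e, rfl⟩ : ∃ e, c = c₀ + e := ⟨c - c₀, by abel⟩
  rw [add_mulVec, smul_mulVec, one_mulVec] at hr
  subst hr
  have hres : S *ᵥ c₀ + μ • c₀ - S *ᵥ (c₀ + e) = μ • c₀ - S *ᵥ e := by
    rw [mulVec_add]; abel
  rw [hres, add_sub_cancel_left, hS.dotProduct_mulVec_add]
  simp only [sub_dotProduct, dotProduct_sub, smul_dotProduct, dotProduct_smul, dotProduct_add,
    smul_eq_mul, dotProduct_comm (S *ᵥ e) c₀, hS.dotProduct_mulVec_comm c₀ e]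
  ring

theorem IsHermitian.ridgeObjective_self [DecidableEq ι] {S : Matrix ι ι ℝ} (hS : S.IsHermitian)
    {μ : ℝ} {c₀ r : ι → ℝ} (hr : (S + μ • 1) *ᵥ c₀ = r) :
    (r - S *ᵥ c₀) ⬝ᵥ (r - S *ᵥ c₀) + μ * (c₀ ⬝ᵥ S *ᵥ c₀) = μ * (c₀ ⬝ᵥ r) := by
  rw [hS.ridgeObjective_eq hr c₀]
  simp

theorem PosSemidef.ridgeObjective_ge [DecidableEq ι] {S : Matrix ι ι ℝ} (hS : S.PosSemidef)
    {μ : ℝ} (hμ : 0 ≤ μ) {c₀ r : ι → ℝ} (hr : (S + μ • 1) *ᵥ c₀ = r) (c : ι → ℝ) :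
    μ * (c₀ ⬝ᵥ r) ≤ (r - S *ᵥ c) ⬝ᵥ (r - S *ᵥ c) + μ * (c ⬝ᵥ S *ᵥ c) := by
  rw [hS.isHermitian.ridgeObjective_eq hr]
  have hfit : 0 ≤ S *ᵥ (c - c₀) ⬝ᵥ S *ᵥ (c - c₀) := by
    simpa using dotProduct_star_self_nonneg (S *ᵥ (c - c₀))
  have hpen := mul_nonneg hμ (hS.dotProduct_mulVec_nonneg' (c - c₀))
  linarith

end Matrix

theorem stmt_19 (n : ℕ) (Sg : Matrix (Fin n) (Fin n) ℝ) (hSg : Sg.PosSemidef)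
    (l : ℝ) (hl : 0 < l)
    (T : Matrix (Fin n) (Fin 2) ℝ) (hT : T.rank = 2)
    (y : Fin n → ℝ) :
    let W : Matrix (Fin n) (Fin n) ℝ := Sg + ((n : ℝ) * l) • 1
    let F : (Fin n → ℝ) → (Fin 2 → ℝ) → ℝ := fun c d =>
      (1 / (n : ℝ)) * (∑ i, (y i - (T.mulVec d + Sg.mulVec c) i) ^ 2) +
        l * (c ⬝ᵥ Sg.mulVec c)
    let dstar : Fin 2 → ℝ := ((Tᵀ * W⁻¹ * T)⁻¹ * Tᵀ * W⁻¹).mulVec y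
    let cstar : Fin n → ℝ := (W⁻¹ * (1 - T * (Tᵀ * W⁻¹ * T)⁻¹ * Tᵀ * W⁻¹)).mulVec y
    ∀ (c : Fin n → ℝ) (d : Fin 2 → ℝ), F cstar dstar ≤ F c d := by
  intro W F dstar cstar c d
  have hn : (n : ℝ) ≠ 0 := by
    have h2n : 2 ≤ n := by simpa [hT] using T.rank_le_card_height
    positivity
  have hnl : 0 < (n : ℝ) * l := by positivity
  have hW : W.PosDef := PosDef.posSemidef_add hSg (PosDef.one.smul hnl)
  have hWinv : ∀ r, W *ᵥ (W⁻¹ *ᵥ r) = r := fun r => by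
    rw [mulVec_mulVec, mul_nonsing_inv W ((isUnit_iff_isUnit_det W).mp hW.isUnit), one_mulVec]
  let r : (Fin 2 → ℝ) → Fin n → ℝ := fun d => y - T *ᵥ d
  have hF : ∀ c d, F c d =
      (1 / n) * ((r d - Sg *ᵥ c) ⬝ᵥ (r d - Sg *ᵥ c) + (n * l) * (c ⬝ᵥ Sg *ᵥ c)) := by
    intro c d
    simp only [F, r, dotProduct, Pi.sub_apply, Pi.add_apply, sq, sub_sub]
    field_simp
  have hprofile : ∀ c d, l * (r d ⬝ᵥ W⁻¹ *ᵥ r d) ≤ F c d := fun c d => by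
    have hridge := hSg.ridgeObjective_ge hnl.le (hWinv (r d)) c
    rw [dotProduct_comm] at hridge
    calc l * (r d ⬝ᵥ W⁻¹ *ᵥ r d) = 1 / n * (n * l * (r d ⬝ᵥ W⁻¹ *ᵥ r d)) := by field_simp
      _ ≤ F c d := hF c d ▸ mul_le_mul_of_nonneg_left hridge (by positivity)
  have hM : (Tᵀ * W⁻¹ * T).PosDef := by
    simpa using hW.inv.conjTranspose_mul_mul_same
      (mulVec_injective_of_rank_eq_card (by simpa using hT))
  have hnormal : (Tᵀ * W⁻¹ * T) *ᵥ dstar = (Tᵀ * W⁻¹) *ᵥ y := by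
    rw [mulVec_mulVec, ← Matrix.mul_assoc, ← Matrix.mul_assoc,
      mul_nonsing_inv _ ((isUnit_iff_isUnit_det _).mp hM.isUnit), Matrix.one_mul]
  have hcstar : cstar = W⁻¹ *ᵥ r dstar := by
    simp only [cstar, r, dstar, ← mulVec_mulVec, sub_mulVec, one_mulVec, Matrix.mul_assoc]
  calc F cstar dstar = l * (r dstar ⬝ᵥ W⁻¹ *ᵥ r dstar) := by
        rw [hF, hcstar, hSg.isHermitian.ridgeObjective_self (hWinv (r dstar)),
          dotProduct_comm]
        field_simp
    _ ≤ l * (r d ⬝ᵥ W⁻¹ *ᵥ r d) :=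
        mul_le_mul_of_nonneg_left (hW.inv.posSemidef.weightedLeastSquares_le T y hnormal d) hl.le
    _ ≤ F c d := hprofile c d
end
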